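/- arXiv:2503.05376 — 2 statements merged into one kernel-verified Lean document; each statement's English description precedes it below -/
import Mathlib

section
/- For the discrete Laplace mechanism with scale λ = 2t/ε: for any reals (or integers) l₁, l₂ with |l₁ - l₂| ≤ t and any output o, the ratio of probabilities Pr[l₁ + N₁ = o] / Pr[l₂ + N₂ = o] is at most e^{ε/2}, where N₁, N₂ are independent discrete Laplace random variables with scale λ. -/
theorem discrete_laplace_indistinguishability
    (t ε : ℝ) (ht : 0 < t) (hε : 0 < ε)
    (l₁ l₂ o : ℤ) (hdist : |(l₁ : ℝ) - l₂| ≤ t) :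
    (((Real.exp (1 / (2 * t / ε)) - 1) / (Real.exp (1 / (2 * t / ε)) + 1)) *
        Real.exp (-|((o - l₁ : ℤ) : ℝ)| / (2 * t / ε)))
      ≤ Real.exp (ε / 2) *
        (((Real.exp (1 / (2 * t / ε)) - 1) / (Real.exp (1 / (2 * t / ε)) + 1)) *
          Real.exp (-|((o - l₂ : ℤ) : ℝ)| / (2 * t / ε))) := by
  set lam := 2 * t / ε with hlamdef
  have hlampos : 0 < lam := by positivity
  have hC : 0 ≤ (Real.exp (1 / lam) - 1) / (Real.exp (1 / lam) + 1) := by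
    apply div_nonneg
    · linarith [Real.one_le_exp (by positivity : (0:ℝ) ≤ 1 / lam)]
    · positivity
  have key : Real.exp (-|((o - l₁ : ℤ) : ℝ)| / lam)
      ≤ Real.exp (ε / 2) * Real.exp (-|((o - l₂ : ℤ) : ℝ)| / lam) := by
    rw [← Real.exp_add]
    apply Real.exp_le_exp.mpr
    have habs : |((o - l₁ : ℤ) : ℝ)| ≥ |((o - l₂ : ℤ) : ℝ)| - t := by
      have := abs_sub_abs_le_abs_sub ((o - l₂ : ℤ) : ℝ) ((o - l₁ : ℤ) : ℝ)
      push_cast at this ⊢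
      have h2 : |(o:ℝ) - l₂ - ((o:ℝ) - l₁)| = |(l₁:ℝ) - l₂| := by ring_nf
      rw [h2] at this
      linarith
    have htlam : t / lam = ε / 2 := by
      rw [hlamdef]; field_simp
    have hdiv : (|((o - l₂ : ℤ) : ℝ)| - |((o - l₁ : ℤ) : ℝ)|) / lam ≤ t / lam :=
      div_le_div_of_nonneg_right (by linarith) hlampos.le
    rw [htlam, sub_div] at hdiv
    rw [neg_div, neg_div]
    linarith [hdiv]
  calc _ ≤ (Real.exp (1 / lam) - 1) / (Real.exp (1 / lam) + 1) *
        (Real.exp (ε / 2) * Real.exp (-|((o - l₂ : ℤ) : ℝ)| / lam)) :=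
        mul_le_mul_of_nonneg_left key hC
    _ = _ := by ring
end

section
/- For the exponential mechanism assigning to each point i in a finite set D the probability p_{x,i} = e^{-|x-i|·ε/(4t)} / Σ_{j∈D} e^{-|x-j|·ε/(4t)}, and for any x, x' with |x - x'| ≤ t, the ratio p_{x,o} / p_{x',o} is at most e^{ε/2} for every o ∈ D. -/
theorem exponential_mechanism_indistinguishability
    (D : Finset ℝ) (hD : D.Nonempty) (ε t : ℝ) (hε : 0 < ε) (ht : 0 < t)
    (x x' : ℝ) (hxx : |x - x'| ≤ t) (o : ℝ) (ho : o ∈ D) :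
    Real.exp (-|x - o| * ε / (4 * t)) / (∑ j ∈ D, Real.exp (-|x - j| * ε / (4 * t)))
      ≤ Real.exp (ε / 2) *
        (Real.exp (-|x' - o| * ε / (4 * t)) /
          (∑ j ∈ D, Real.exp (-|x' - j| * ε / (4 * t)))) := by
  have ht' : (0:ℝ) < 4 * t := by linarith
  have key : ∀ a b : ℝ, |a - b| ≤ t → ∀ u : ℝ,
      Real.exp (-|a - u| * ε / (4 * t)) ≤
        Real.exp (ε / 4) * Real.exp (-|b - u| * ε / (4 * t)) := by
    intro a b hab u
    rw [← Real.exp_add]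
    apply Real.exp_le_exp.2
    have h1 : |b - u| - |a - u| ≤ t := by
      have := abs_sub_abs_le_abs_sub (b - u) (a - u)
      have h2 : |b - u - (a - u)| = |a - b| := by
        rw [show b - u - (a - u) = b - a by ring, abs_sub_comm]
      linarith [h2 ▸ this]
    have hgoal : -|a - u| * ε / (4 * t) - -|b - u| * ε / (4 * t) ≤ ε / 4 := by
      rw [div_sub_div_same, div_le_div_iff₀ ht' (by norm_num : (0:ℝ) < 4)]
      nlinarith
    linarith
  have hS : 0 < ∑ j ∈ D, Real.exp (-|x - j| * ε / (4 * t)) :=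
    Finset.sum_pos (fun j _ => Real.exp_pos _) hD
  have hS' : 0 < ∑ j ∈ D, Real.exp (-|x' - j| * ε / (4 * t)) :=
    Finset.sum_pos (fun j _ => Real.exp_pos _) hD
  rw [mul_div_assoc', div_le_div_iff₀ hS hS']
  have h1 := key x x' hxx o
  have h2 : (∑ j ∈ D, Real.exp (-|x' - j| * ε / (4 * t))) ≤
      Real.exp (ε / 4) * ∑ j ∈ D, Real.exp (-|x - j| * ε / (4 * t)) := by
    rw [Finset.mul_sum]
    exact Finset.sum_le_sum fun j _ => key x' x (by rwa [abs_sub_comm]) j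
  have hexp : Real.exp (ε / 4) * Real.exp (ε / 4) = Real.exp (ε / 2) := by
    rw [← Real.exp_add]; congr 1; ring
  calc Real.exp (-|x - o| * ε / (4 * t)) * ∑ j ∈ D, Real.exp (-|x' - j| * ε / (4 * t))
      ≤ (Real.exp (ε / 4) * Real.exp (-|x' - o| * ε / (4 * t))) *
        (Real.exp (ε / 4) * ∑ j ∈ D, Real.exp (-|x - j| * ε / (4 * t))) :=
        mul_le_mul h1 h2 hS'.le (by positivity)
    _ = Real.exp (ε / 2) * Real.exp (-|x' - o| * ε / (4 * t)) *
        ∑ j ∈ D, Real.exp (-|x - j| * ε / (4 * t)) := by rw [← hexp]; ring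
end
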